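/- Let X be a finite simplicial complex of dimension d, 0 < λ < 1. For σ, τ ∈ X, the maps φ^λ_σ and φ^λ_τ (defined by normalizing the truncated barycentric coordinates φ_λ(t_v(·))) coincide on cl ⟨σ⟩_λ ∩ cl ⟨τ⟩_λ. Consequently the formula φ(x) := φ^λ_σ(x) for any σ with x ∈ cl ⟨σ⟩_λ gives a well-defined continuous map φ : |X| → |X|, provided 0 < λ < 1/(d+1). -/

import Mathlib

/-!
On `cl ⟨σ⟩_λ` every vertex outside `σ` has coordinate `≤ λ`, so `φ_λ` kills it and the
truncation to `σ` in `φ^λ_σ` changes nothing: `φ^λ_σ` is the global formula `φ` there, whence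
any two `φ^λ_σ`, `φ^λ_τ` agree on the overlap. Since `λ (d + 1) < 1`, some coordinate of a
point of a simplex exceeds `λ`, so the normalizing sum is positive on `|X|`; this gives
continuity, and `φ(x)` lies in the face spanned by the vertices with coordinate `> λ`.
-/

/-- The truncated rescaling `φ_λ(t) = max(0, (t-λ)/(1-λ))`. -/
noncomputable def phiL (lam t : ℝ) : ℝ := max 0 ((t - lam) / (1 - lam))

/-- The map `φ^λ_σ`, with values forced into `|σ|`. -/
noncomputable def phiSig {V : Type*} [Fintype V] [DecidableEq V] (lam : ℝ)
    (σ : Finset V) (x : V → ℝ) : V → ℝ :=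
  fun v => if v ∈ σ then phiL lam (x v) / ∑ w, phiL lam (x w) else 0

/-- The global map `φ`, given by the same normalization formula. -/
noncomputable def phiGlob {V : Type*} [Fintype V] (lam : ℝ) (x : V → ℝ) : V → ℝ :=
  fun v => phiL lam (x v) / ∑ w, phiL lam (x w)

/-- The closed geometric simplex spanned by a set `s` of vertices. -/
def gsS {V : Type*} [Fintype V] (s : Set V) : Set (V → ℝ) :=
  {x | (∀ v, 0 ≤ x v) ∧ (∀ v, v ∉ s → x v = 0) ∧ ∑ v, x v = 1}

/-- The geometric realization of a simplicial complex `K`. -/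
def geomReal {V : Type*} [Fintype V] (K : Set (Finset V)) : Set (V → ℝ) :=
  ⋃ σ ∈ K, gsS (↑σ : Set V)

/-- The closure of the `λ`-cell of a simplex `σ` inside `|X|`. -/
def clLamCell {V : Type*} [Fintype V] (K : Set (Finset V)) (lam : ℝ)
    (σ : Finset V) : Set (V → ℝ) :=
  {x | x ∈ geomReal K ∧ (∀ v ∈ σ, lam ≤ x v) ∧ ∀ v ∉ σ, x v ≤ lam}

open Finset

lemma phiL_nonneg (lam t : ℝ) : 0 ≤ phiL lam t := le_max_left _ _

lemma phiL_eq_zero_of_le {lam t : ℝ} (hlam : lam < 1) (h : t ≤ lam) : phiL lam t = 0 :=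
  max_eq_left (div_nonpos_of_nonpos_of_nonneg (by linarith) (by linarith))

lemma phiL_pos_of_lt {lam t : ℝ} (hlam : lam < 1) (h : lam < t) : 0 < phiL lam t :=
  lt_max_iff.mpr (Or.inr (div_pos (by linarith) (by linarith)))

lemma continuous_phiL (lam : ℝ) : Continuous (phiL lam) :=
  continuous_const.max ((continuous_id.sub continuous_const).div_const _)

lemma lt_one_of_lt_one_div_succ {d : ℕ} {lam : ℝ} (h : lam < 1 / (d + 1)) : lam < 1 := by
  have : (1 : ℝ) / (d + 1) ≤ 1 := div_le_one_of_le₀ (by simp) (by positivity)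
  linarith

lemma card_mul_lt_one {V : Type*} {s : Finset V} {d : ℕ} {lam : ℝ} (hs : s.card ≤ d + 1)
    (h0 : 0 ≤ lam) (h1 : lam < 1 / (d + 1)) : (s.card : ℝ) * lam < 1 :=
  calc (s.card : ℝ) * lam ≤ (d + 1) * lam := by gcongr; exact_mod_cast hs
    _ < 1 := by rwa [lt_div_iff₀' (by positivity)] at h1

section

variable {V : Type*} [Fintype V]

lemma sum_eq_one_of_mem_gsS {s : Finset V} {x : V → ℝ} (hx : x ∈ gsS (s : Set V)) :
    ∑ v ∈ s, x v = 1 := by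
  rw [← hx.2.2]
  exact sum_subset s.subset_univ fun v _ hv => hx.2.1 v hv

lemma exists_lt_of_mem_gsS {s : Finset V} {x : V → ℝ} {lam : ℝ} (hx : x ∈ gsS (s : Set V))
    (hs : (s.card : ℝ) * lam < 1) : ∃ v ∈ s, lam < x v := by
  by_contra! h
  have : (1 : ℝ) ≤ s.card * lam :=
    calc (1 : ℝ) = ∑ v ∈ s, x v := (sum_eq_one_of_mem_gsS hx).symm
      _ ≤ ∑ _v ∈ s, lam := sum_le_sum h
      _ = s.card * lam := by rw [sum_const, nsmul_eq_mul]
  linarith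

lemma sum_phiL_pos {s : Finset V} {x : V → ℝ} {lam : ℝ} (hx : x ∈ gsS (s : Set V))
    (hlam : lam < 1) (hs : (s.card : ℝ) * lam < 1) : 0 < ∑ w, phiL lam (x w) := by
  obtain ⟨v, -, hv⟩ := exists_lt_of_mem_gsS hx hs
  exact sum_pos' (fun w _ => phiL_nonneg _ _) ⟨v, mem_univ v, phiL_pos_of_lt hlam hv⟩

lemma sum_phiL_pos_of_mem_geomReal {K : Set (Finset V)} {d : ℕ}
    (hdim : ∀ σ ∈ K, σ.card ≤ d + 1) {lam : ℝ} (h0 : 0 ≤ lam) (h1 : lam < 1 / (d + 1))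
    {x : V → ℝ} (hx : x ∈ geomReal K) : 0 < ∑ w, phiL lam (x w) := by
  obtain ⟨s, hsK, hxs⟩ := Set.mem_iUnion₂.mp hx
  exact sum_phiL_pos hxs (lt_one_of_lt_one_div_succ h1) (card_mul_lt_one (hdim s hsK) h0 h1)

lemma phiSig_eq_phiGlob [DecidableEq V] {σ : Finset V} {x : V → ℝ} {lam : ℝ}
    (hlam : lam < 1) (hx : ∀ v ∉ σ, x v ≤ lam) : phiSig lam σ x = phiGlob lam x := by
  funext v
  by_cases hv : v ∈ σ
  · simp [phiSig, phiGlob, hv]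
  · simp [phiSig, phiGlob, hv, phiL_eq_zero_of_le hlam (hx v hv)]

lemma phiGlob_mem_gsS {s : Set V} {x : V → ℝ} {lam : ℝ} (hlam : lam < 1)
    (hpos : 0 < ∑ w, phiL lam (x w)) (hs : ∀ v ∉ s, x v ≤ lam) : phiGlob lam x ∈ gsS s := by
  refine ⟨fun v => div_nonneg (phiL_nonneg _ _) hpos.le, fun v hv => ?_, ?_⟩
  · simp [phiGlob, phiL_eq_zero_of_le hlam (hs v hv)]
  · simp only [phiGlob]
    rw [← sum_div, div_self hpos.ne']

lemma continuousOn_phiGlob {s : Set (V → ℝ)} {lam : ℝ}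
    (hs : ∀ x ∈ s, ∑ w, phiL lam (x w) ≠ 0) : ContinuousOn (phiGlob lam) s := by
  have hφ (v : V) : Continuous fun x : V → ℝ => phiL lam (x v) :=
    (continuous_phiL lam).comp (continuous_apply v)
  exact continuousOn_pi.mpr fun v =>
    (hφ v).continuousOn.div (continuous_finsetSum _ fun w _ => hφ w).continuousOn hs

lemma mapsTo_phiGlob_geomReal [DecidableEq V] {K : Set (Finset V)} {d : ℕ}
    (hK : ∀ σ ∈ K, ∀ τ : Finset V, τ ⊆ σ → τ.Nonempty → τ ∈ K)
    (hdim : ∀ σ ∈ K, σ.card ≤ d + 1) {lam : ℝ} (h0 : 0 < lam) (h1 : lam < 1 / (d + 1)) :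
    Set.MapsTo (phiGlob lam) (geomReal K) (geomReal K) := by
  intro x hx
  obtain ⟨s, hsK, hxs⟩ := Set.mem_iUnion₂.mp hx
  obtain ⟨v, hvs, hv⟩ := exists_lt_of_mem_gsS hxs (card_mul_lt_one (hdim s hsK) h0.le h1)
  have hτK : s.filter (lam < x ·) ∈ K :=
    hK s hsK _ (filter_subset _ _) ⟨v, mem_filter.mpr ⟨hvs, hv⟩⟩
  refine Set.mem_iUnion₂.mpr ⟨_, hτK, phiGlob_mem_gsS (lt_one_of_lt_one_div_succ h1)
    (sum_phiL_pos_of_mem_geomReal hdim h0.le h1 hx) fun w hw => ?_⟩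
  by_cases hws : w ∈ s
  · simpa [hws] using hw
  · rw [hxs.2.1 w hws]
    exact h0.le

end

theorem phi_global_wellDefined_general {V : Type*} [Fintype V] [DecidableEq V]
    (K : Set (Finset V)) (d : ℕ)
    (hK : ∀ σ ∈ K, ∀ τ : Finset V, τ ⊆ σ → τ.Nonempty → τ ∈ K)
    (hdim : ∀ σ ∈ K, σ.card ≤ d + 1)
    (lam : ℝ) (h0 : 0 < lam) (h1 : lam < 1 / (d + 1)) :
    (∀ σ ∈ K, ∀ τ ∈ K, Set.EqOn (phiSig lam σ) (phiSig lam τ)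
        (clLamCell K lam σ ∩ clLamCell K lam τ)) ∧
    (∀ σ ∈ K, Set.EqOn (phiSig lam σ) (phiGlob lam) (clLamCell K lam σ)) ∧
    Set.MapsTo (phiGlob lam) (geomReal K) (geomReal K) ∧
    ContinuousOn (phiGlob lam : (V → ℝ) → (V → ℝ)) (geomReal K) := by
  have hglob : ∀ σ : Finset V, Set.EqOn (phiSig lam σ) (phiGlob lam) (clLamCell K lam σ) :=
    fun σ x hx => phiSig_eq_phiGlob (lt_one_of_lt_one_div_succ h1) hx.2.2
  refine ⟨fun σ _ τ _ x hx => (hglob σ hx.1).trans (hglob τ hx.2).symm,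
    fun σ _ => hglob σ, mapsTo_phiGlob_geomReal hK hdim h0 h1, ?_⟩
  exact continuousOn_phiGlob fun x hx => (sum_phiL_pos_of_mem_geomReal hdim h0.le h1 hx).ne'

/-- for `0 < λ < 1/(d+1)`, the maps `φ^λ_σ` and `φ^λ_τ` coincide
on `cl ⟨σ⟩_λ ∩ cl ⟨τ⟩_λ`, `φ^λ_σ` agrees with the global formula `φ` on
`cl ⟨σ⟩_λ`, and `φ` is a well-defined (maps `|X|` into `|X|`) continuous map
on `|X|`. -/
theorem phi_global_wellDefined {V : Type*} [Fintype V] [DecidableEq V]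
    (K : Set (Finset V)) (d : ℕ)
    (hne : ∀ σ ∈ K, σ.Nonempty)
    (hK : ∀ σ ∈ K, ∀ τ : Finset V, τ ⊆ σ → τ.Nonempty → τ ∈ K)
    (hdim : ∀ σ ∈ K, σ.card ≤ d + 1)
    (lam : ℝ) (h0 : 0 < lam) (h1 : lam < 1 / (d + 1)) :
    (∀ σ ∈ K, ∀ τ ∈ K, Set.EqOn (phiSig lam σ) (phiSig lam τ)
        (clLamCell K lam σ ∩ clLamCell K lam τ)) ∧
    (∀ σ ∈ K, Set.EqOn (phiSig lam σ) (phiGlob lam) (clLamCell K lam σ)) ∧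
    Set.MapsTo (phiGlob lam) (geomReal K) (geomReal K) ∧
    ContinuousOn (phiGlob lam : (V → ℝ) → (V → ℝ)) (geomReal K) :=
  phi_global_wellDefined_general K d hK hdim lam h0 h1
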